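/- arXiv:2009.02720 — 9 statements merged into one kernel-verified Lean document; each statement's English description precedes it below -/
import Mathlib

section
/- Let U be an infinite set and let S ⊆ U be a subset with |S| < |U|. Then there exists a bijective function ⋆ : U × U → U whose set of fixpoints is exactly S, i.e. {u ∈ U : u ⋆ u = u} = S. -/
/-- If `U` is infinite and `S ⊆ U` with `|S| < |U|`, then there exists a
bijective `⋆ : U × U → U` whose set of fixpoints `{u | u ⋆ u = u}` is exactly `S`. -/
theorem stmt0 {U : Type*} [Infinite U] (S : Set U)
    (h : Cardinal.mk S < Cardinal.mk U) :
    ∃ star : U × U → U, Function.Bijective star ∧ {u : U | star (u, u) = u} = S := by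
  classical
  have hU : Cardinal.aleph0 ≤ Cardinal.mk U := Cardinal.infinite_iff.mp inferInstance
  -- the complement T has full cardinality
  have hT : Cardinal.mk ↥Sᶜ = Cardinal.mk U := by
    refine le_antisymm (Cardinal.mk_subtype_le _) ?_
    by_contra hlt
    push_neg at hlt
    have := Cardinal.add_lt_of_lt hU h hlt
    rw [Cardinal.mk_sum_compl S] at this
    exact lt_irrefl _ this
  have hTinf : Cardinal.aleph0 ≤ Cardinal.mk ↥Sᶜ := hT ▸ hU
  -- an equivalence ℕ × Sᶜ ≃ Sᶜ
  have heq : Cardinal.mk (ℕ × ↥Sᶜ) = Cardinal.mk ↥Sᶜ := by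
    rw [Cardinal.mk_prod, Cardinal.mk_nat, Cardinal.lift_aleph0, Cardinal.lift_uzero,
      Cardinal.aleph0_mul_eq hTinf]
  obtain ⟨e⟩ := Cardinal.eq.mp heq
  -- the "diagonal" map d
  set d : U → U := fun u =>
    if hu : u ∈ S then u
    else ((e ((e.symm ⟨u, hu⟩).1 + 1, (e.symm ⟨u, hu⟩).2)) : U) with hd
  have hdS : ∀ u ∈ S, d u = u := fun u hu => dif_pos hu
  have hdT : ∀ (u : U) (hu : u ∉ S),
      d u = ((e ((e.symm ⟨u, hu⟩).1 + 1, (e.symm ⟨u, hu⟩).2)) : U) :=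
    fun u hu => dif_neg hu
  have hd_memT : ∀ (u : U) (hu : u ∉ S), d u ∉ S := by
    intro u hu
    rw [hdT u hu]
    exact (e _).2
  have hdfix : ∀ u : U, d u = u ↔ u ∈ S := by
    intro u
    constructor
    · intro hfix
      by_contra hu
      rw [hdT u hu] at hfix
      have : e ((e.symm ⟨u, hu⟩).1 + 1, (e.symm ⟨u, hu⟩).2) = (⟨u, hu⟩ : ↥Sᶜ) :=
        Subtype.ext hfix
      rw [show (⟨u, hu⟩ : ↥Sᶜ) = e (e.symm ⟨u, hu⟩) by simp] at this
      have h2 := e.injective this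
      have := congrArg Prod.fst h2
      simp at this
    · exact hdS u
  have hdinj : Function.Injective d := by
    intro a b hab
    by_cases ha : a ∈ S <;> by_cases hb : b ∈ S
    · rwa [hdS a ha, hdS b hb] at hab
    · exfalso
      apply hd_memT b hb
      rw [← hab, hdS a ha]
      exact ha
    · exfalso
      apply hd_memT a ha
      rw [hab, hdS b hb]
      exact hb
    · rw [hdT a ha, hdT b hb] at hab
      have h2 : e ((e.symm ⟨a, ha⟩).1 + 1, (e.symm ⟨a, ha⟩).2)
          = e ((e.symm ⟨b, hb⟩).1 + 1, (e.symm ⟨b, hb⟩).2) := Subtype.ext hab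
      have h3 := e.injective h2
      have h4 : e.symm ⟨a, ha⟩ = e.symm ⟨b, hb⟩ := by
        have h5 := congrArg Prod.fst h3
        have h6 := congrArg Prod.snd h3
        simp at h5 h6
        exact Prod.ext h5 h6
      have := e.symm.injective h4
      exact congrArg Subtype.val this
  -- complement of the range of d
  set C : Set U := {u | ∃ hu : u ∉ S, (e.symm ⟨u, hu⟩).1 = 0} with hC
  have hrange : (Set.range d)ᶜ = C := by
    ext u
    simp only [Set.mem_compl_iff, Set.mem_range, not_exists, hC, Set.mem_setOf_eq]
    constructor
    · intro hu
      have huS : u ∉ S := fun hmem => hu u (hdS u hmem)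
      refine ⟨huS, ?_⟩
      by_contra hne
      obtain ⟨m, hm⟩ := Nat.exists_eq_succ_of_ne_zero hne
      set t2 := (e.symm ⟨u, huS⟩).2 with ht2
      set v : U := ((e (m, t2)) : U) with hv
      have hvT : v ∉ S := (e (m, t2)).2
      have hsymm : e.symm ⟨v, hvT⟩ = (m, t2) := by
        rw [show (⟨v, hvT⟩ : ↥Sᶜ) = e (m, t2) from Subtype.ext rfl]; simp
      have : d v = u := by
        rw [hdT v hvT, hsymm]
        show ((e (m + 1, t2)) : U) = u
        have : (m + 1, t2) = e.symm ⟨u, huS⟩ := by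
          rw [Prod.ext_iff]; exact ⟨by omega, rfl⟩
        rw [this]; simp
      exact hu v this
    · rintro ⟨hu, h0⟩ v hv
      by_cases hvS : v ∈ S
      · rw [hdS v hvS] at hv; exact hu (hv ▸ hvS)
      · rw [hdT v hvS] at hv
        have : e ((e.symm ⟨v, hvS⟩).1 + 1, (e.symm ⟨v, hvS⟩).2) = ⟨u, hu⟩ :=
          Subtype.ext hv
        have h2 : ((e.symm ⟨v, hvS⟩).1 + 1, (e.symm ⟨v, hvS⟩).2) = e.symm ⟨u, hu⟩ := by
          rw [← this]; simp
        have := congrArg Prod.fst h2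
        simp [h0] at this
  -- C has the cardinality of U, via the bijection t ↦ e (0, t)
  have hsub : ∀ t : ↥Sᶜ, ((e (0, t)) : U) ∈ C := by
    intro t
    refine ⟨(e (0, t)).2, ?_⟩
    rw [show (⟨((e (0, t)) : U), (e (0, t)).2⟩ : ↥Sᶜ) = e (0, t) from rfl]
    simp
  set f : ↥Sᶜ → ↥C := fun t => ⟨((e (0, t)) : U), hsub t⟩ with hf
  have hfbij : Function.Bijective f := by
    constructor
    · intro a b hab
      have h1 := congrArg Subtype.val hab
      simp only [hf] at h1
      have h2 := e.injective (Subtype.ext h1)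
      exact (Prod.ext_iff.mp h2).2
    · rintro ⟨u, hu, h0⟩
      refine ⟨(e.symm ⟨u, hu⟩).2, ?_⟩
      apply Subtype.ext
      show ((e (0, (e.symm ⟨u, hu⟩).2)) : U) = u
      have : (0, (e.symm ⟨u, hu⟩).2) = e.symm ⟨u, hu⟩ := by
        rw [Prod.ext_iff]; exact ⟨h0.symm, rfl⟩
      rw [this]; simp
  have hCcard : Cardinal.mk ↥C = Cardinal.mk U := by
    rw [← Cardinal.mk_congr (Equiv.ofBijective f hfbij), hT]
  -- the off-diagonal set D has the cardinality of U
  set D : Set (U × U) := {p | p.1 ≠ p.2} with hD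
  have hDcard : Cardinal.mk ↥D = Cardinal.mk U := by
    refine le_antisymm ?_ ?_
    · calc Cardinal.mk ↥D ≤ Cardinal.mk (U × U) := Cardinal.mk_subtype_le _
        _ = Cardinal.mk U * Cardinal.mk U := by
            rw [Cardinal.mk_prod, Cardinal.lift_id]
        _ = Cardinal.mk U := Cardinal.mul_eq_self hU
    · obtain ⟨u0, u1, hne⟩ := exists_pair_ne U
      have hg : ∀ u : U, (u, if u = u0 then u1 else u0) ∈ D := by
        intro u
        simp only [hD, Set.mem_setOf_eq]
        split
        · rename_i h1; rw [h1]; exact hne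
        · rename_i h1; exact h1
      refine Cardinal.mk_le_of_injective (f := fun u : U => (⟨_, hg u⟩ : ↥D)) ?_
      intro a b hab
      exact (Prod.ext_iff.mp (congrArg Subtype.val hab)).1
  obtain ⟨g⟩ := Cardinal.eq.mp (hDcard.trans hCcard.symm)
  have hnotin : ∀ u : U, u ∈ C → u ∉ Set.range d := by
    intro u hu
    rw [← hrange] at hu
    exact hu
  -- the final bijection
  refine ⟨fun p => if hp : p.1 = p.2 then d p.1 else ((g ⟨p, hp⟩ : ↥C) : U), ?_, ?_⟩
  · constructor
    · intro a b hab
      simp only [] at hab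
      by_cases ha : a.1 = a.2 <;> by_cases hb : b.1 = b.2
      · rw [dif_pos ha, dif_pos hb] at hab
        have h2 := hdinj hab
        exact Prod.ext h2 (by rw [← ha, ← hb]; exact h2)
      · rw [dif_pos ha, dif_neg hb] at hab
        exact absurd ⟨a.1, hab⟩ (hnotin _ (g ⟨b, hb⟩).2)
      · rw [dif_neg ha, dif_pos hb] at hab
        exact absurd ⟨b.1, hab.symm⟩ (hnotin _ (g ⟨a, ha⟩).2)
      · rw [dif_neg ha, dif_neg hb] at hab
        exact congrArg Subtype.val (g.injective (Subtype.ext hab))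
    · intro u
      by_cases hu : u ∈ Set.range d
      · obtain ⟨v, hv⟩ := hu
        exact ⟨(v, v), by simp [hv]⟩
      · have huC : u ∈ C := by rw [← hrange]; exact hu
        refine ⟨(g.symm ⟨u, huC⟩ : ↥D), ?_⟩
        have hne : ((g.symm ⟨u, huC⟩ : ↥D) : U × U).1 ≠ ((g.symm ⟨u, huC⟩ : ↥D) : U × U).2 :=
          (g.symm ⟨u, huC⟩).2
        simp only [dif_neg hne, Subtype.coe_eta]
        simp
  · ext u
    simp only [Set.mem_setOf_eq, dif_pos rfl]
    exact hdfix u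
end

section
/- Let U be an infinite set, let S ⊆ U be a subset with |S| < |U|, and let t be a binary tree with t ≠ nil. Then there exists an injective function ⋆ : U × U → U such that S ⊆ fix_t(⋆) and |fix_t(⋆)| = |S|. -/
/-- Binary trees. -/
inductive BT : Type where
  | nil : BT
  | bin : BT → BT → BT

/-- Fold of a binary operation over a binary tree, starting from `u` at the leaves. -/
def BT.map {α : Type*} (f : α → α → α) (u : α) : BT → α
  | BT.nil => u
  | BT.bin a b => f (BT.map f u a) (BT.map f u b)

/-- Fork of binary relations induced by `star`. -/
def fork {U : Type*} (star : U × U → U) (R S : Set (U × U)) : Set (U × U) :=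
  {p | ∃ x y, (p.1, x) ∈ R ∧ (p.1, y) ∈ S ∧ p.2 = star (x, y)}

/-- The relation `t̲ = map t ∇ Id`. -/
def relT {U : Type*} (star : U × U → U) (t : BT) : Set (U × U) :=
  BT.map (fork star) (Set.diagonal U) t

/-- The `t`-controlled fixpoints of `star`. -/
def fixT {U : Type*} (star : U × U → U) (t : BT) : Set U :=
  {u | BT.map (fun x y => star (x, y)) u t = u}

/-- Partial identity on a set. -/
def idOn {U : Type*} (X : Set U) : Set (U × U) :=
  {p | p.1 = p.2 ∧ p.1 ∈ X}

/-- If `U` is infinite, `S ⊆ U` with `|S| < |U|`, and `t ≠ nil` is a binary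
tree, then there is an injective `⋆ : U × U → U` with `S ⊆ fix_t(⋆)` and `|fix_t(⋆)| = |S|`. -/
theorem stmt1 {U : Type*} [Infinite U] (S : Set U)
    (h : Cardinal.mk S < Cardinal.mk U) (t : BT) (ht : t ≠ BT.nil) :
    ∃ star : U × U → U, Function.Injective star ∧ S ⊆ fixT star t ∧
      Cardinal.mk (fixT star t) = Cardinal.mk S := by
  classical
  -- an injection of U × U × ℕ into the complement of S
  obtain ⟨j⟩ : Nonempty ((U × U × ℕ) ↪ (Sᶜ : Set U)) := by
    rw [← Cardinal.le_def, Cardinal.mk_compl_of_infinite S h]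
    have hU : Cardinal.aleph0 ≤ Cardinal.mk U := Cardinal.infinite_iff.mp ‹Infinite U›
    calc Cardinal.mk (U × U × ℕ)
        = Cardinal.mk U * (Cardinal.mk U * Cardinal.aleph0) := by simp [Cardinal.mk_prod]
      _ = Cardinal.mk U * Cardinal.mk U := by rw [Cardinal.mul_aleph0_eq hU]
      _ = Cardinal.mk U := Cardinal.mul_eq_self hU
      _ ≤ Cardinal.mk U := le_rfl
  -- a grading function
  set g : U → ℕ := fun u => if hu : ∃ p : U × U × ℕ, (j p : U) = u then hu.choose.2.2 else 0
    with hg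
  have hgj : ∀ x y n, g (j (x, y, n) : U) = n := by
    intro x y n
    have he : ∃ p : U × U × ℕ, (j p : U) = (j (x, y, n) : U) := ⟨(x, y, n), rfl⟩
    have := he.choose_spec
    have hp : he.choose = (x, y, n) := j.injective (Subtype.coe_injective this)
    simp only [hg, dif_pos he, hp]
  -- the operation
  set star : U × U → U := fun p =>
    if p.1 ∈ S ∧ p.1 = p.2 then p.1 else (j (p.1, p.2, max (g p.1) (g p.2) + 1) : U)
    with hstar
  have hdiag : ∀ s ∈ S, star (s, s) = s := by
    intro s hs; simp [hstar, hs]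
  have hoff : ∀ p : U × U, ¬(p.1 ∈ S ∧ p.1 = p.2) →
      star p = (j (p.1, p.2, max (g p.1) (g p.2) + 1) : U) := by
    intro p hp
    simp only [hstar]
    rw [if_neg hp]
  -- S is fixed pointwise by every tree
  have hfixS : ∀ s ∈ S, ∀ a : BT, BT.map (fun x y => star (x, y)) s a = s := by
    intro s hs a
    induction a with
    | nil => rfl
    | bin a b iha ihb => simp [BT.map, iha, ihb, hdiag s hs]
  -- growth lemma outside S
  have hgrow : ∀ u : U, u ∉ S → ∀ a : BT,
      BT.map (fun x y => star (x, y)) u a ∉ S ∧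
      g u ≤ g (BT.map (fun x y => star (x, y)) u a) := by
    intro u hu a
    induction a with
    | nil => exact ⟨hu, le_rfl⟩
    | bin a b iha ihb =>
      obtain ⟨hpS, hpg⟩ := iha
      obtain ⟨hqS, hqg⟩ := ihb
      set p := BT.map (fun x y => star (x, y)) u a
      set q := BT.map (fun x y => star (x, y)) u b
      have hval : BT.map (fun x y => star (x, y)) u (BT.bin a b) =
          (j (p, q, max (g p) (g q) + 1) : U) := hoff (p, q) (fun hc => hpS hc.1)
      constructor
      · rw [hval]; exact (j (p, q, max (g p) (g q) + 1)).2
      · rw [hval, hgj]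
        exact le_trans hpg (le_trans (le_max_left _ _) (Nat.le_succ _))
  -- fixT star t = S
  have hfix : fixT star t = S := by
    ext u
    constructor
    · intro hu
      by_contra huS
      obtain ⟨a, b, rfl⟩ : ∃ a b, t = BT.bin a b := by
        cases t with
        | nil => exact absurd rfl ht
        | bin a b => exact ⟨a, b, rfl⟩
      obtain ⟨hpS, hpg⟩ := hgrow u huS a
      obtain ⟨hqS, hqg⟩ := hgrow u huS b
      set p := BT.map (fun x y => star (x, y)) u a
      set q := BT.map (fun x y => star (x, y)) u b
      have hval : BT.map (fun x y => star (x, y)) u (BT.bin a b) =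
          (j (p, q, max (g p) (g q) + 1) : U) := hoff (p, q) (fun hc => hpS hc.1)
      have hu' : BT.map (fun x y => star (x, y)) u (BT.bin a b) = u := hu
      have : g u = max (g p) (g q) + 1 := by rw [← hu', hval, hgj]
      omega
    · intro hu
      exact hfixS u hu t
  have hdiagval : ∀ p : U × U, p.1 ∈ S ∧ p.1 = p.2 → star p = p.1 := by
    intro p hp
    simp only [hstar]
    rw [if_pos hp]
  refine ⟨star, ?_, ?_, ?_⟩
  · -- injectivity
    intro p q hpq
    by_cases hp : p.1 ∈ S ∧ p.1 = p.2 <;> by_cases hq : q.1 ∈ S ∧ q.1 = q.2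
    · rw [hdiagval p hp, hdiagval q hq] at hpq
      have h2 : p.2 = q.2 := by rw [← hp.2, ← hq.2, hpq]
      exact Prod.ext hpq h2
    · exfalso
      rw [hdiagval p hp, hoff q hq] at hpq
      exact (j (q.1, q.2, max (g q.1) (g q.2) + 1)).2 (hpq ▸ hp.1)
    · exfalso
      rw [hoff p hp, hdiagval q hq] at hpq
      exact (j (p.1, p.2, max (g p.1) (g p.2) + 1)).2 (hpq.symm ▸ hq.1)
    · rw [hoff p hp, hoff q hq] at hpq
      have h3 := j.injective (Subtype.coe_injective hpq)
      have h4 : p.1 = q.1 := congrArg (fun r : U × U × ℕ => r.1) h3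
      have h5 : p.2 = q.2 := congrArg (fun r : U × U × ℕ => r.2.1) h3
      exact Prod.ext h4 h5
  · rw [hfix]
  · rw [hfix]
end

section
/- Let U be an infinite set and let S ⊆ U be a subset with |S| < |U|. Then there exists an injective function ⋆ : U × U → U such that fix_π(⋆) = S, i.e. {u ∈ U : ∃ v ∈ U, u ⋆ v = u} = S. -/
/-- If `U` is infinite and `S ⊆ U` with `|S| < |U|`, then there exists an
injective `⋆ : U × U → U` with `fix_π(⋆) = {u | ∃ v, u ⋆ v = u} = S`. -/
theorem stmt2 {U : Type*} [Infinite U] (S : Set U)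
    (h : Cardinal.mk S < Cardinal.mk U) :
    ∃ star : U × U → U, Function.Injective star ∧
      {u : U | ∃ v : U, star (u, v) = u} = S := by
  classical
  have hcompl : Cardinal.mk (↥Sᶜ) = Cardinal.mk U := Cardinal.mk_compl_of_infinite S h
  have hle : Cardinal.mk ((U × U) × Bool) ≤ Cardinal.mk (↥Sᶜ) := by
    rw [hcompl]
    have h1 : Cardinal.mk (U × U) = Cardinal.mk U := by
      simpa using Cardinal.mul_eq_self (Cardinal.aleph0_le_mk U)
    calc Cardinal.mk ((U × U) × Bool) = Cardinal.mk (U × U) * 2 := by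
          simp [Cardinal.mk_prod, Cardinal.mk_bool]
      _ ≤ Cardinal.mk (U × U) * Cardinal.mk (U × U) := by
          apply mul_le_mul_right
          rw [h1]
          exact le_trans ((Cardinal.nat_lt_aleph0 2).le.trans_eq (by norm_num)) (Cardinal.aleph0_le_mk U)
      _ = Cardinal.mk (U × U) := Cardinal.mul_eq_self (by rw [h1]; exact Cardinal.aleph0_le_mk U)
      _ = Cardinal.mk U := h1
  obtain ⟨G⟩ := Cardinal.le_def _ _ |>.mp hle
  -- F : U × U → U, injective, always avoiding the first coordinate, landing in Sᶜ
  set F : U × U → U := fun p => if (G (p, false) : U) = p.1 then (G (p, true) : U) else (G (p, false) : U) with hF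
  have hFcompl : ∀ p, F p ∈ Sᶜ := by
    intro p
    simp only [hF]
    split <;> exact Subtype.coe_prop _
  have hFne : ∀ p : U × U, F p ≠ p.1 := by
    intro p
    simp only [hF]
    split
    · rename_i heq
      intro hc
      have : G (p, true) = G (p, false) := Subtype.ext (hc.trans heq.symm)
      have := G.injective this
      simp at this
    · assumption
  have hFinj : Function.Injective F := by
    intro p q hpq
    simp only [hF] at hpq
    split at hpq <;> split at hpq
    · have : G (p, true) = G (q, true) := Subtype.ext hpq
      exact (Prod.ext_iff.mp (G.injective this)).1
    · have : G (p, true) = G (q, false) := Subtype.ext hpq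
      have := G.injective this
      simp at this
    · have : G (p, false) = G (q, true) := Subtype.ext hpq
      have := G.injective this
      simp at this
    · have : G (p, false) = G (q, false) := Subtype.ext hpq
      exact (Prod.ext_iff.mp (G.injective this)).1
  refine ⟨fun p => if p.1 ∈ S ∧ p.2 = p.1 then p.1 else F p, ?_, ?_⟩
  · intro p q hpq
    simp only at hpq
    split at hpq <;> split at hpq
    · rename_i hp hq
      exact Prod.ext hpq (by rw [hp.2, hq.2, hpq])
    · rename_i hp hq
      exact absurd (hpq ▸ hp.1) (hFcompl q)
    · rename_i hp hq
      exact absurd (hpq ▸ hq.1) (hFcompl p)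
    · exact hFinj hpq
  · ext u
    simp only [Set.mem_setOf_eq]
    constructor
    · rintro ⟨v, hv⟩
      by_contra hu
      rw [if_neg (fun hc => hu hc.1)] at hv
      exact hFne (u, v) hv
    · intro hu
      exact ⟨u, by simp [hu]⟩
end

section
/- Let U be an infinite set, let S ⊆ U be a subset with |S| < |U|, and let s be a nonempty sequence over the alphabet {π, ρ}. Then there exists an injective function ⋆ : U × U → U such that S ⊆ fix_s(⋆) and |fix_s(⋆)| = |S|. -/
/-- The alphabet `{π, ρ}`. -/
inductive PR : Type where
  | pi : PR
  | rho : PR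

/-- Nonempty sequences over `{π, ρ}`. -/
inductive Sec : Type where
  | elem : PR → Sec
  | cons : PR → Sec → Sec

/-- Relation composition. -/
def comp {U : Type*} (R S : Set (U × U)) : Set (U × U) :=
  {p | ∃ c, (p.1, c) ∈ R ∧ (c, p.2) ∈ S}

/-- The projection relations induced by `star`:
  `π = {(x ⋆ y, x)}` and `ρ = {(x ⋆ y, y)}`. -/
def prRel {U : Type*} (star : U × U → U) : PR → Set (U × U)
  | PR.pi => {p | ∃ x y, p.1 = star (x, y) ∧ p.2 = x}
  | PR.rho => {p | ∃ x y, p.1 = star (x, y) ∧ p.2 = y}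

/-- The relation `s̲` associated with a sequence `s`. -/
def secRel {U : Type*} (star : U × U → U) : Sec → Set (U × U)
  | Sec.elem x => prRel star x
  | Sec.cons x s => comp (prRel star x) (secRel star s)

/-- The `s`-controlled fixpoints of `star`. -/
def fixS {U : Type*} (star : U × U → U) (s : Sec) : Set U :=
  {u | (u, u) ∈ secRel star s}

/-- If `U` is infinite, `S ⊆ U` with `|S| < |U|`, and `s` is a nonempty
sequence over `{π, ρ}`, then there is an injective `⋆ : U × U → U` with `S ⊆ fix_s(⋆)`
and `|fix_s(⋆)| = |S|`. -/
theorem stmt3 {U : Type*} [Infinite U] (S : Set U)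
    (h : Cardinal.mk S < Cardinal.mk U) (s : Sec) :
    ∃ star : U × U → U, Function.Injective star ∧ S ⊆ fixS star s ∧
      Cardinal.mk (fixS star s) = Cardinal.mk S := by
  classical
  -- An injection of `(U × U) × ℕ` into the complement of `S`.
  have hcompl : Cardinal.mk (Sᶜ : Set U) = Cardinal.mk U :=
    Cardinal.mk_compl_of_infinite S h
  have hle : Cardinal.mk ((U × U) × U) ≤ Cardinal.mk (Sᶜ : Set U) := by
    rw [hcompl]
    have h0 : Cardinal.aleph0 ≤ Cardinal.mk U := Cardinal.aleph0_le_mk U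
    have h1 : Cardinal.mk (U × U) = Cardinal.mk U := by
      simp [Cardinal.mul_eq_self h0]
    have h2 : Cardinal.mk ((U × U) × U) = Cardinal.mk U * Cardinal.mk U := by
      simp [Cardinal.mk_prod, h1]
    rw [h2, Cardinal.mul_eq_self h0]
  obtain ⟨G0⟩ : Nonempty (((U × U) × U) ↪ (Sᶜ : Set U)) := Cardinal.le_def _ _ |>.mp hle
  let G : ((U × U) × ℕ) ↪ (Sᶜ : Set U) :=
    (Function.Embedding.prodMap (Function.Embedding.refl _)
      (Infinite.natEmbedding U)).trans G0
  -- a grading function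
  let g : U → ℕ := fun u => if h : ∃ q, ((G q : U)) = u then h.choose.2 else 0
  have hgG : ∀ q, g (G q) = q.2 := by
    intro q
    have hex : ∃ q', ((G q' : U)) = (G q : U) := ⟨q, rfl⟩
    have h2 : hex.choose = q := G.injective (Subtype.coe_injective hex.choose_spec)
    show (if h : ∃ q', ((G q' : U)) = (G q : U) then h.choose.2 else 0) = q.2
    rw [dif_pos hex, h2]
  -- the operation
  set star : U × U → U := fun p =>
    if p.1 = p.2 ∧ p.1 ∈ S then p.1
    else (G (p, max (g p.1) (g p.2) + 1) : U) with hstar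
  have hstarS : ∀ u ∈ S, star (u, u) = u := by
    intro u hu
    simp [hstar, hu]
  have hstarG : ∀ p : U × U, ¬(p.1 = p.2 ∧ p.1 ∈ S) →
      star p = (G (p, max (g p.1) (g p.2) + 1) : U) := by
    intro p hp
    simp [hstar, hp]
  have hstarD : ∀ p : U × U, p.1 = p.2 ∧ p.1 ∈ S → star p = p.1 := by
    intro p hp
    simp only [hstar]
    rw [if_pos hp]
  -- injectivity
  have hinj : Function.Injective star := by
    intro p q hpq
    by_cases hp : p.1 = p.2 ∧ p.1 ∈ S <;> by_cases hq : q.1 = q.2 ∧ q.1 ∈ S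
    · rw [hstarD p hp, hstarD q hq] at hpq
      exact Prod.ext hpq (by rw [← hp.1, ← hq.1, hpq])
    · exfalso
      rw [hstarD p hp, hstarG q hq] at hpq
      exact (G (q, max (g q.1) (g q.2) + 1)).2 (hpq ▸ hp.2)
    · exfalso
      rw [hstarD q hq, hstarG p hp] at hpq
      exact (G (p, max (g p.1) (g p.2) + 1)).2 (hpq.symm ▸ hq.2)
    · rw [hstarG p hp, hstarG q hq] at hpq
      have := G.injective (Subtype.coe_injective hpq)
      exact (Prod.ext_iff.mp this).1
  -- single step analysis
  have hstep : ∀ (x : PR) (a b : U), (a, b) ∈ prRel star x →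
      (a ∈ S ∧ b = a) ∨ (a ∉ S ∧ g b < g a) := by
    intro x a b hab
    have key : ∀ x0 y0 : U, a = star (x0, y0) → (b = x0 ∨ b = y0) →
        (a ∈ S ∧ b = a) ∨ (a ∉ S ∧ g b < g a) := by
      intro x0 y0 ha hb
      by_cases hd : x0 = y0 ∧ x0 ∈ S
      · left
        obtain ⟨hd1, hd2⟩ := hd
        subst hd1
        rw [hstarS x0 hd2] at ha
        subst ha
        constructor
        · exact hd2
        · rcases hb with hb | hb <;> exact hb
      · right
        have ha' : a = (G ((x0, y0), max (g x0) (g y0) + 1) : U) := by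
          rw [ha]; exact hstarG (x0, y0) hd
        constructor
        · rw [ha']; exact (G ((x0, y0), _)).2
        · rw [ha', hgG ((x0, y0), max (g x0) (g y0) + 1)]
          rcases hb with hb | hb <;> rw [hb] <;> omega
    cases x with
    | pi =>
      obtain ⟨x0, y0, ha, hb⟩ := hab
      exact key x0 y0 ha (Or.inl hb)
    | rho =>
      obtain ⟨x0, y0, ha, hb⟩ := hab
      exact key x0 y0 ha (Or.inr hb)
  -- chain analysis
  have hchain : ∀ (t : Sec) (a w : U), (a, w) ∈ secRel star t →
      (a ∈ S ∧ w = a) ∨ (a ∉ S ∧ g w < g a) := by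
    intro t
    induction t with
    | elem x => exact hstep x
    | cons x t ih =>
      intro a w haw
      obtain ⟨c, hac, hcw⟩ := haw
      rcases hstep x a c hac with ⟨haS, hca⟩ | ⟨haS, hlt⟩
      · rw [hca] at hcw
        rcases ih a w hcw with h1 | h1
        · exact Or.inl h1
        · exact absurd haS h1.1
      · right
        refine ⟨haS, ?_⟩
        rcases ih c w hcw with ⟨hcS, hwc⟩ | ⟨_, hwc⟩
        · rw [hwc]; exact hlt
        · omega
  -- S ⊆ fixS
  have hfwd : ∀ (t : Sec) (u : U), u ∈ S → (u, u) ∈ secRel star t := by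
    intro t
    induction t with
    | elem x =>
      intro u hu
      cases x <;> exact ⟨u, u, (hstarS u hu).symm, rfl⟩
    | cons x t ih =>
      intro u hu
      refine ⟨u, ?_, ih u hu⟩
      cases x <;> exact ⟨u, u, (hstarS u hu).symm, rfl⟩
  have hfix : fixS star s = S := by
    ext u
    constructor
    · intro hu
      rcases hchain s u u hu with h1 | h1
      · exact h1.1
      · omega
    · exact hfwd s u
  exact ⟨star, hinj, by rw [hfix], by rw [hfix]⟩
end

section
/- Let U be a set, ⋆ : U × U → U a function, and t, t' binary trees with t ≠ nil and t' ≠ nil. Then for every binary tree context c that is a variant of t' (i.e. c[nil] = t'), one has fix_t(⋆) ∩ fix_{t'}(⋆) ⊆ fix_{c[t]}(⋆). -/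
/-- Binary tree contexts: trees possibly containing holes `[]`. -/
inductive BTC : Type where
  | nil : BTC
  | hole : BTC
  | bin : BTC → BTC → BTC

/-- Substitution `c[t]`: replace every hole of `c` by `t`. -/
def BTC.subst : BTC → BTC → BTC
  | BTC.hole, t => t
  | BTC.nil, _ => BTC.nil
  | BTC.bin i d, t => BTC.bin (BTC.subst i t) (BTC.subst d t)

/-- Canonical embedding of binary trees into binary tree contexts. -/
def BT.toBTC : BT → BTC
  | BT.nil => BTC.nil
  | BT.bin i d => BTC.bin (BT.toBTC i) (BT.toBTC d)


/-- Fold over contexts, with value `h` at holes. -/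
def BTC.fold {α : Type*} (f : α → α → α) (u h : α) : BTC → α
  | BTC.nil => u
  | BTC.hole => h
  | BTC.bin a b => f (BTC.fold f u h a) (BTC.fold f u h b)

theorem fold_toBTC {α : Type*} (f : α → α → α) (u h : α) (s : BT) :
    BTC.fold f u h (BT.toBTC s) = BT.map f u s := by
  induction s with
  | nil => rfl
  | bin a b ha hb => simp [BT.toBTC, BTC.fold, BT.map, ha, hb]

theorem fold_subst {α : Type*} (f : α → α → α) (u h : α) (c s : BTC) :
    BTC.fold f u h (BTC.subst c s) = BTC.fold f u (BTC.fold f u h s) c := by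
  induction c with
  | nil => rfl
  | hole => rfl
  | bin a b ha hb => simp [BTC.subst, BTC.fold, ha, hb]

/-- For `t, t' ≠ nil` and any context `c` that is a variant of `t'`
(i.e. `c[nil] = t'`), if `tc` is the binary tree with `c[t] = tc`, then
`fix_t(⋆) ∩ fix_{t'}(⋆) ⊆ fix_{c[t]}(⋆)`. -/
theorem stmt4 {U : Type*} (star : U × U → U) (t t' : BT)
    (ht : t ≠ BT.nil) (ht' : t' ≠ BT.nil)
    (c : BTC) (hvariant : BTC.subst c (BT.toBTC BT.nil) = BT.toBTC t')
    (tc : BT) (htc : BTC.subst c (BT.toBTC t) = BT.toBTC tc) :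
    fixT star t ∩ fixT star t' ⊆ fixT star tc := by
  rintro u ⟨hu, hu'⟩
  have h1 := congrArg (BTC.fold (fun x y => star (x, y)) u u) hvariant
  rw [fold_subst, fold_toBTC, fold_toBTC] at h1
  have h2 := congrArg (BTC.fold (fun x y => star (x, y)) u u) htc
  rw [fold_subst, fold_toBTC, fold_toBTC] at h2
  show BT.map (fun x y => star (x, y)) u tc = u
  rw [← h2]
  have hut : BT.map (fun x y => star (x, y)) u t = u := hu
  simp only [BT.map] at h1
  rw [hut, h1]
  exact hu'
end

section
/- Let U be a set, ⋆ : U × U → U an injective function, t a binary tree, and s a nonempty sequence over {π, ρ} with s ≪ t. Then fix_t(⋆) ⊆ fix_s(⋆). -/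
/-- The relation `s ≪ t` between sequences and binary trees. -/
inductive Ll : Sec → BT → Prop where
  | elem_pi (t' : BT) : Ll (Sec.elem PR.pi) (BT.bin BT.nil t')
  | elem_rho (t' : BT) : Ll (Sec.elem PR.rho) (BT.bin t' BT.nil)
  | cons_pi {s' : Sec} {t' : BT} (t'' : BT) :
      Ll s' t' → Ll (Sec.cons PR.pi s') (BT.bin t' t'')
  | cons_rho {s' : Sec} {t'' : BT} (t' : BT) :
      Ll s' t'' → Ll (Sec.cons PR.rho s') (BT.bin t' t'')

/-- If `⋆` is injective and `s ≪ t`, then `fix_t(⋆) ⊆ fix_s(⋆)`. -/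
theorem stmt6 {U : Type*} (star : U × U → U) (hinj : Function.Injective star)
    (t : BT) (s : Sec) (hll : Ll s t) :
    fixT star t ⊆ fixS star s := by
  intro u hu
  have key : ∀ (s : Sec) (t : BT), Ll s t → ∀ v : U,
      (BT.map (fun x y => star (x, y)) v t, v) ∈ secRel star s := by
    intro s t h
    induction h with
    | elem_pi t' => intro v; exact ⟨v, _, rfl, rfl⟩
    | elem_rho t' => intro v; exact ⟨_, v, rfl, rfl⟩
    | cons_pi t'' h ih =>
        intro v
        exact ⟨_, ⟨_, _, rfl, rfl⟩, ih v⟩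
    | cons_rho t' h ih =>
        intro v
        exact ⟨_, ⟨_, _, rfl, rfl⟩, ih v⟩
  have := key s t hll u
  rwa [hu] at this
end

section
/- Let U be a set, ⋆ : U × U → U a function, F a collection of binary relations on U, and t a binary tree with t ≠ nil. Then Si_{t̲}(F) = 𝒫(Id_{fix_t(⋆)}) ∩ F, i.e. {r ∈ F : r ⊆ t̲ ∩ Id} = {r ⊆ U × U : r ⊆ Id_{fix_t(⋆)}} ∩ F. -/
lemma relT_iff {U : Type*} (star : U × U → U) (t : BT) (u v : U) :
    (u, v) ∈ relT star t ↔ v = BT.map (fun x y => star (x, y)) u t := by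
  induction t generalizing v with
  | nil => simp [relT, BT.map, Set.diagonal, eq_comm]
  | bin a b iha ihb =>
      constructor
      · rintro ⟨x, y, hx, hy, rfl⟩
        simp only [BT.map]
        rw [← (iha x).mp hx, ← (ihb y).mp hy]
      · rintro rfl
        exact ⟨_, _, (iha _).mpr rfl, (ihb _).mpr rfl, rfl⟩

/-- For `t ≠ nil` and a collection `F` of binary relations on `U`,
`Si_{t̲}(F) = 𝒫(Id_{fix_t(⋆)}) ∩ F`. -/
theorem stmt10 {U : Type*} (star : U × U → U) (F : Set (Set (U × U)))
    (t : BT) (ht : t ≠ BT.nil) :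
    {r | r ∈ F ∧ r ⊆ relT star t ∩ Set.diagonal U}
      = {r | r ⊆ idOn (fixT star t)} ∩ F := by
  have key : relT star t ∩ Set.diagonal U = idOn (fixT star t) := by
    ext ⟨u, v⟩
    simp only [Set.mem_inter_iff, Set.mem_diagonal_iff, idOn, fixT, Set.mem_setOf_eq,
      relT_iff]
    constructor
    · rintro ⟨h1, rfl⟩; exact ⟨rfl, h1.symm⟩
    · rintro ⟨rfl, h2⟩; exact ⟨h2.symm, rfl⟩
  ext r
  simp [key, and_comm]
end

section
/- Let U be a set, ⋆ : U × U → U an injective function, t a binary tree, and s a nonempty sequence over {π, ρ} with s ≪ t. Then for all u, v ∈ U, if u = map t ⋆ v then (u, v) ∈ s̲. -/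
/-- If `⋆` is injective and `s ≪ t`, then `u = map t ⋆ v` implies
`(u, v) ∈ s̲`. -/
theorem stmt13 {U : Type*} (star : U × U → U) (hinj : Function.Injective star)
    (t : BT) (s : Sec) (hll : Ll s t) :
    ∀ u v : U, u = BT.map (fun x y => star (x, y)) v t → (u, v) ∈ secRel star s := by
  induction hll with
  | elem_pi t' =>
    intro u v hu
    exact ⟨v, _, hu, rfl⟩
  | elem_rho t' =>
    intro u v hu
    exact ⟨_, v, hu, rfl⟩
  | cons_pi t'' h ih =>
    intro u v hu
    exact ⟨_, ⟨_, _, hu, rfl⟩, ih _ v rfl⟩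
  | cons_rho t' h ih =>
    intro u v hu
    exact ⟨_, ⟨_, _, hu, rfl⟩, ih _ v rfl⟩
end

section
/- Let U and V be sets, ⋆_U : U × U → U and ⋆_V : V × V → V functions, and φ a bijection from binary relations on U to binary relations on V that preserves union, intersection, the identity relation, and fork (φ(R ∪ S) = φ(R) ∪ φ(S), φ(R ∩ S) = φ(R) ∩ φ(S), φ(Id_U) = Id_V, φ(R ∇_U S) = φ(R) ∇_V φ(S)). Then for every binary tree t and every relation r on U: r ⊆ t̲^U ∩ Id_U if and only if φ(r) ⊆ t̲^V ∩ Id_V; in particular φ restricts to a bijection between Si_{t̲}(U) = {r : r ⊆ t̲^U ∩ Id_U} and Si_{t̲}(V) = {r : r ⊆ t̲^V ∩ Id_V}. -/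
/-- If `φ` is a bijection between the binary relations on `U` and on `V`
preserving union, intersection, identity and fork, then for every binary tree `t` and every
relation `r` on `U`: `r ⊆ t̲^U ∩ Id_U ↔ φ(r) ⊆ t̲^V ∩ Id_V`; in particular `φ` restricts
to a bijection between `Si_{t̲}(U)` and `Si_{t̲}(V)`. -/
theorem stmt15 {U V : Type*} (starU : U × U → U) (starV : V × V → V)
    (φ : Set (U × U) → Set (V × V)) (hbij : Function.Bijective φ)
    (hUnion : ∀ R S : Set (U × U), φ (R ∪ S) = φ R ∪ φ S)
    (hInter : ∀ R S : Set (U × U), φ (R ∩ S) = φ R ∩ φ S)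
    (hId : φ (Set.diagonal U) = Set.diagonal V)
    (hFork : ∀ R S : Set (U × U), φ (fork starU R S) = fork starV (φ R) (φ S)) :
    (∀ (t : BT) (r : Set (U × U)),
      r ⊆ relT starU t ∩ Set.diagonal U ↔ φ r ⊆ relT starV t ∩ Set.diagonal V) ∧
    (∀ t : BT, Set.BijOn φ {r | r ⊆ relT starU t ∩ Set.diagonal U}
      {r | r ⊆ relT starV t ∩ Set.diagonal V}) := by
  have hsub : ∀ R S : Set (U × U), R ⊆ S ↔ φ R ⊆ φ S := by
    intro R S
    constructor
    · intro h
      have : φ (R ∩ S) = φ R := by rw [Set.inter_eq_left.mpr h]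
      rw [hInter] at this
      exact Set.inter_eq_left.mp this
    · intro h
      have : φ (R ∩ S) = φ R := by rw [hInter]; exact Set.inter_eq_left.mpr h
      exact Set.inter_eq_left.mp (hbij.injective this)
  have hrel : ∀ t : BT, φ (relT starU t) = relT starV t := by
    intro t
    induction t with
    | nil => exact hId
    | bin a b iha ihb =>
        show φ (fork starU (relT starU a) (relT starU b)) = _
        rw [hFork, iha, ihb]; rfl
  have key : ∀ (t : BT) (r : Set (U × U)),
      r ⊆ relT starU t ∩ Set.diagonal U ↔ φ r ⊆ relT starV t ∩ Set.diagonal V := by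
    intro t r
    rw [hsub, hInter, hrel, hId]
  refine ⟨key, fun t => ⟨fun r hr => (key t r).mp hr,
    fun r _ s _ h => hbij.injective h, fun s hs => ?_⟩⟩
  obtain ⟨r, rfl⟩ := hbij.surjective s
  exact ⟨r, (key t r).mpr hs, rfl⟩
end
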